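/- arXiv:1711.06030 — 10 statements merged into one kernel-verified Lean document; each statement's English description precedes it below -/
import Mathlib

section
/- There exists an approval-based sub-committee voting instance with exactly two candidate subsets and quota 1 for each subset that admits no committee satisfying span-wise justified representation (SW-JR). Concretely: with voters N = {1,2}, candidate subsets C_1 = {a_1, a_2} and C_2 = {b_1, b_2}, quotas k_1 = k_2 = 1 (so k = 2 and n/k = 1), and approval ballots A_1 = {a_1} and A_2 = {a_2}, no set W ⊆ C_1 ∪ C_2 with |W ∩ C_1| = 1 and |W ∩ C_2| = 1 satisfies SW-JR. -/
open Finset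

/-- Span-wise justified representation: every group of voters `X` with
`|X| ≥ n/k` and a commonly approved candidate has some approved candidate in `W`. -/
def SWJR {α : Type*} [DecidableEq α] (n k : ℕ) (A : Fin n → Finset α)
    (W : Finset α) : Prop :=
  ∀ X : Finset (Fin n), (n : ℝ) / (k : ℝ) ≤ (X.card : ℝ) →
    (∃ c, ∀ i ∈ X, c ∈ A i) → (W ∩ X.biUnion A).Nonempty

/-- Weak span-wise justified representation: every group of voters `X` with
`|X| ≥ n/k` and a commonly approved candidate in *every* candidate subset `Cs j`
has some approved candidate in `W`. -/
def WeakSWJR {α : Type*} [DecidableEq α] (n ℓ k : ℕ) (Cs : Fin ℓ → Finset α)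
    (A : Fin n → Finset α) (W : Finset α) : Prop :=
  ∀ X : Finset (Fin n), (n : ℝ) / (k : ℝ) ≤ (X.card : ℝ) →
    (∀ j, ∃ c ∈ Cs j, ∀ i ∈ X, c ∈ A i) → (W ∩ X.biUnion A).Nonempty

/-- Intra-wise justified representation: for every subset `Cs j` (with quota `q j`),
every group of voters `X` with `|X| ≥ n/(q j)` and a commonly approved candidate in `Cs j`
has some approved candidate in `W ∩ Cs j`. -/
def IWJR {α : Type*} [DecidableEq α] (n ℓ : ℕ) (Cs : Fin ℓ → Finset α)
    (q : Fin ℓ → ℕ) (A : Fin n → Finset α) (W : Finset α) : Prop :=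
  ∀ j, ∀ X : Finset (Fin n), (n : ℝ) / (q j : ℝ) ≤ (X.card : ℝ) →
    (∃ c ∈ Cs j, ∀ i ∈ X, c ∈ A i) → ((W ∩ Cs j) ∩ X.biUnion A).Nonempty

/-- Justified representation in a single-committee approval voting instance
with committee size `κ` and ballots `B`. -/
def JR {α : Type*} [DecidableEq α] (n κ : ℕ) (B : Fin n → Finset α)
    (S : Finset α) : Prop :=
  ∀ X : Finset (Fin n), (n : ℝ) / (κ : ℝ) ≤ (X.card : ℝ) →
    (∃ c, ∀ i ∈ X, c ∈ B i) → (S ∩ X.biUnion B).Nonempty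

/-- `harmonicR j = 1 + 1/2 + ⋯ + 1/j`, with `harmonicR 0 = 0`. -/
noncomputable def harmonicR (j : ℕ) : ℝ := ∑ p ∈ Finset.range j, (1 : ℝ) / (p + 1)

/-- Span-wise PAV score of a committee `W`. -/
noncomputable def SWPAV {α : Type*} [DecidableEq α] (n : ℕ) (A : Fin n → Finset α)
    (W : Finset α) : ℝ :=
  ∑ i, harmonicR ((W ∩ A i).card)

/-- Intra-wise PAV score of a committee `W`. -/
noncomputable def IWPAV {α : Type*} [DecidableEq α] (n ℓ : ℕ) (Cs : Fin ℓ → Finset α)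
    (A : Fin n → Finset α) (W : Finset α) : ℝ :=
  ∑ j, ∑ i, harmonicR ((W ∩ A i ∩ Cs j).card)

/-- In the instance with voters `N = {1,2}`, candidate subsets
`C₁ = {a₁,a₂} = {0,1}` and `C₂ = {b₁,b₂} = {2,3}` (inside `Fin 4`), quotas
`k₁ = k₂ = 1` (so `k = 2`), and ballots `A₁ = {a₁}`, `A₂ = {a₂}`, no committee
satisfies SW-JR. -/
theorem stmt_0 :
    ∀ W : Finset (Fin 4),
      W ⊆ ({0, 1} : Finset (Fin 4)) ∪ ({2, 3} : Finset (Fin 4)) →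
      (W ∩ ({0, 1} : Finset (Fin 4))).card = 1 →
      (W ∩ ({2, 3} : Finset (Fin 4))).card = 1 →
      ¬ SWJR 2 2 (fun i : Fin 2 => if i = 0 then ({0} : Finset (Fin 4)) else {1}) W := by
  intro W _ h1 _ hJR
  have h0 : (0 : Fin 4) ∈ W := by
    obtain ⟨c, hc⟩ := hJR {0} (by norm_num) ⟨0, by decide⟩
    simp only [Finset.mem_inter, Finset.mem_biUnion, Finset.mem_singleton] at hc
    obtain ⟨hcW, i, hi, hci⟩ := hc
    subst hi
    simp at hci
    subst hci
    exact hcW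
  have h1' : (1 : Fin 4) ∈ W := by
    obtain ⟨c, hc⟩ := hJR {1} (by norm_num) ⟨1, by decide⟩
    simp only [Finset.mem_inter, Finset.mem_biUnion, Finset.mem_singleton] at hc
    obtain ⟨hcW, i, hi, hci⟩ := hc
    subst hi
    simp at hci
    subst hci
    exact hcW
  have : ({0, 1} : Finset (Fin 4)) ⊆ W ∩ {0, 1} := by
    intro x hx
    simp only [Finset.mem_insert, Finset.mem_singleton] at hx
    rcases hx with h | h <;> subst h <;> simp [h0, h1']
  have hcard := Finset.card_le_card this
  simp at hcard
  omega
end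

section
/- There exists an approval-based sub-committee voting instance and a committee W of that instance such that W satisfies weak span-wise justified representation (weak-SW-JR) but does not satisfy span-wise justified representation (SW-JR). -/
open Finset

/-- There is an approval-based SCV instance and a committee `W`
of that instance satisfying weak-SW-JR but not SW-JR. -/
theorem stmt_2 :
    ∃ (n ℓ : ℕ) (Cs : Fin ℓ → Finset ℕ) (q : Fin ℓ → ℕ)
      (A : Fin n → Finset ℕ) (W : Finset ℕ),
      0 < n ∧ 0 < ℓ ∧ (∀ j, 0 < q j) ∧
      (∀ j1 j2 : Fin ℓ, j1 ≠ j2 → Disjoint (Cs j1) (Cs j2)) ∧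
      (∀ i, A i ⊆ Finset.univ.biUnion Cs) ∧
      W ⊆ Finset.univ.biUnion Cs ∧ (∀ j, (W ∩ Cs j).card = q j) ∧
      WeakSWJR n ℓ (∑ j, q j) Cs A W ∧ ¬ SWJR n (∑ j, q j) A W := by
  refine ⟨1, 2, ![{0,1}, {2}], ![1,1], fun _ => {0}, {1,2}, one_pos, two_pos,
    ?_, ?_, ?_, ?_, ?_, ?_, ?_⟩
  · decide
  · decide
  · intro i x hx
    fin_cases i
    simp only [Finset.mem_biUnion]
    exact ⟨0, Finset.mem_univ _, by fin_cases hx <;> decide⟩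
  · intro x hx
    simp only [Finset.mem_biUnion]
    fin_cases hx
    · exact ⟨0, Finset.mem_univ _, by decide⟩
    · exact ⟨1, Finset.mem_univ _, by decide⟩
  · decide
  · intro X hX hc
    exfalso
    have hXne : X.Nonempty := by
      rcases X.eq_empty_or_nonempty with h | h
      · exfalso
        rw [h] at hX
        simp at hX
        norm_num at hX
      · exact h
    obtain ⟨i, hi⟩ := hXne
    obtain ⟨c, hcmem, hcall⟩ := hc 1
    have := hcall i hi
    fin_cases i
    fin_cases hcmem
    simp at this
  · intro h
    have := h {0} (by norm_num) ⟨0, by intro i hi; fin_cases i; decide⟩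
    obtain ⟨x, hx⟩ := this
    simp only [Finset.mem_inter, Finset.mem_biUnion] at hx
    obtain ⟨hxW, i, hi, hxA⟩ := hx
    fin_cases i
    simp only [Matrix.cons_val_zero, Finset.mem_singleton] at hxA
    subst hxA
    simp at hxW
end

section
/- There exists an approval-based sub-committee voting instance and a committee W of that instance such that W satisfies weak span-wise justified representation (weak-SW-JR) but does not satisfy intra-wise justified representation (IW-JR). Concretely this holds for the instance with 12 voters, C_1 = {c_1,…,c_7} with quota k_1 = 1, C_2 = {a,b,c} with quota k_2 = 2, ballots A_i = {c_i, a} for i ∈ {1,…,6}, A_i = {c_7, b} for i ∈ {7,…,10}, A_i = {c} for i ∈ {11,12}, and committee W = {c_1, b, c}. -/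
open Finset

/-- Candidate subsets for the concrete instance of STATEMENT 3:
`C₁ = {c₁,…,c₇} = {0,…,6}` and `C₂ = {a,b,c} = {7,8,9}` inside `Fin 10`. -/
def Cs3 : Fin 2 → Finset (Fin 10) := ![{0, 1, 2, 3, 4, 5, 6}, {7, 8, 9}]

/-- Quotas `k₁ = 1`, `k₂ = 2`. -/
def q3 : Fin 2 → ℕ := ![1, 2]

/-- Ballots: `A_i = {c_i, a}` for voters `1,…,6`; `A_i = {c₇, b}` for voters
`7,…,10`; `A_i = {c}` for voters `11, 12` (0-indexed here). -/
def A3 : Fin 12 → Finset (Fin 10) := fun i =>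
  if h : (i : ℕ) < 6 then {⟨(i : ℕ), by omega⟩, 7}
  else if (i : ℕ) < 10 then {6, 8} else {9}

/-- in the instance above, the committee `W = {c₁, b, c} = {0,8,9}`
is a valid committee satisfying weak-SW-JR but not IW-JR. -/
theorem stmt_3 :
    (∀ j, (({0, 8, 9} : Finset (Fin 10)) ∩ Cs3 j).card = q3 j) ∧
    WeakSWJR 12 2 3 Cs3 A3 ({0, 8, 9} : Finset (Fin 10)) ∧
    ¬ IWJR 12 2 Cs3 q3 A3 ({0, 8, 9} : Finset (Fin 10)) := by
  refine ⟨by decide, ?_, ?_⟩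
  · -- weak-SW-JR
    intro X hcard hcom
    have h2 : 2 ≤ X.card := by norm_num at hcard; omega
    obtain ⟨c, hc1, hcall⟩ := hcom 0
    by_cases hmid : ∃ i ∈ X, 6 ≤ (i:ℕ) ∧ (i:ℕ) < 10
    · obtain ⟨i, hi, h6, h10⟩ := hmid
      refine ⟨8, Finset.mem_inter.2 ⟨by decide, Finset.mem_biUnion.2 ⟨i, hi, ?_⟩⟩⟩
      simp only [A3, dif_neg (by omega : ¬ (i:ℕ) < 6), if_pos h10]
      decide
    · push_neg at hmid
      exfalso
      have huniq : ∀ i ∈ X, (i:ℕ) = (c:ℕ) := by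
        intro i hi
        have hc := hcall i hi
        by_cases h6 : (i:ℕ) < 6
        · simp only [A3, dif_pos h6] at hc
          rcases Finset.mem_insert.mp hc with h | h
          · rw [h]
          · have h7 : c = 7 := by simpa using h
            subst h7
            exact absurd hc1 (by decide)
        · have h10 : ¬ (i:ℕ) < 10 := by
            by_contra h'
            exact absurd (hmid i hi) (by push_neg; omega)
          simp only [A3, dif_neg h6, if_neg h10] at hc
          have h9 : c = 9 := by simpa using hc
          subst h9
          exact absurd hc1 (by decide)
      obtain ⟨a, ha, b, hb, hab⟩ := Finset.one_lt_card.mp (by omega : 1 < X.card)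
      exact hab (Fin.val_inj.mp (by rw [huniq a ha, huniq b hb]))
  · -- ¬ IW-JR
    intro h
    have hX : (({0,1,2,3,4,5} : Finset (Fin 12)).card) = 6 := by decide
    have := h 1 ({0,1,2,3,4,5} : Finset (Fin 12))
      (by rw [hX]; norm_num [q3]) ⟨7, by decide, by decide⟩
    revert this
    simp only [Finset.Nonempty, not_exists]
    decide
end

section
/- There exists an approval-based sub-committee voting instance and a committee W of that instance such that W satisfies intra-wise justified representation (IW-JR) but does not satisfy weak span-wise justified representation (weak-SW-JR). -/
open Finset

/-- There is an approval-based SCV instance and a committee `W`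
of that instance satisfying IW-JR but not weak-SW-JR. -/
theorem stmt_4 :
    ∃ (n ℓ : ℕ) (Cs : Fin ℓ → Finset ℕ) (q : Fin ℓ → ℕ)
      (A : Fin n → Finset ℕ) (W : Finset ℕ),
      0 < n ∧ 0 < ℓ ∧ (∀ j, 0 < q j) ∧
      (∀ j1 j2 : Fin ℓ, j1 ≠ j2 → Disjoint (Cs j1) (Cs j2)) ∧
      (∀ i, A i ⊆ Finset.univ.biUnion Cs) ∧
      W ⊆ Finset.univ.biUnion Cs ∧ (∀ j, (W ∩ Cs j).card = q j) ∧
      IWJR n ℓ Cs q A W ∧ ¬ WeakSWJR n ℓ (∑ j, q j) Cs A W := by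
  refine ⟨2, 2, ![{0,1},{2,3}], ![1,1], ![{0,2},{1,3}], {1,3}, ?_, ?_, ?_, ?_, ?_, ?_, ?_, ?_, ?_⟩
  · norm_num
  · norm_num
  · intro j; fin_cases j <;> norm_num
  · intro j1 j2 h; fin_cases j1 <;> fin_cases j2 <;> simp_all <;> decide
  · intro i; fin_cases i <;> decide
  · decide
  · intro j; fin_cases j <;> decide
  · intro j X hX ⟨c, hc, hca⟩
    exfalso
    have h2 : (2 : ℝ) ≤ (X.card : ℝ) := by
      calc (2 : ℝ) = 2 / ((![1,1] : Fin 2 → ℕ) j : ℝ) := by fin_cases j <;> norm_num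
        _ ≤ _ := hX
    have h2' : 2 ≤ X.card := by exact_mod_cast h2
    have hXu : X = Finset.univ := Finset.eq_univ_of_card X (le_antisymm (Finset.card_le_univ X) (by simpa using h2'))
    have h0 := hca 0 (hXu ▸ Finset.mem_univ 0)
    have h1 := hca 1 (hXu ▸ Finset.mem_univ 1)
    simp [Matrix.cons_val_zero, Matrix.cons_val_one] at h0 h1
    rcases h0 with h0 | h0 <;> rcases h1 with h1 | h1 <;> omega
  · intro h
    have := h {0} (by norm_num) (by
      intro j
      fin_cases j
      · exact ⟨0, by decide, by intro i hi; fin_cases i <;> simp_all⟩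
      · exact ⟨2, by decide, by intro i hi; fin_cases i <;> simp_all⟩)
    revert this
    decide
end

section
/- Weak span-wise justified representation and intra-wise justified representation are not mutually exclusive: there exists an approval-based sub-committee voting instance and a committee W of that instance such that W simultaneously satisfies both weak-SW-JR and IW-JR, while the same instance also admits a committee satisfying weak-SW-JR but not IW-JR and a committee satisfying IW-JR but not weak-SW-JR. -/
open Finset

namespace Stmt5Aux

def Cs : Fin 2 → Finset ℕ := ![{0,7,8},{2,6,9,10}]
def q : Fin 2 → ℕ := ![1,2]
def A : Fin 5 → Finset ℕ := ![{8,9},{8,9},{0,2,6},{0,2,6},{0,6}]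

lemma card2 {c : ℕ} (h : (5:ℝ)/(3:ℝ) ≤ (c:ℝ)) : 2 ≤ c := by
  by_contra hc
  push_neg at hc
  interval_cases c <;> norm_num at h

lemma card3 {c : ℕ} (h : (5:ℝ)/(2:ℝ) ≤ (c:ℝ)) : 3 ≤ c := by
  by_contra hc
  push_neg at hc
  interval_cases c <;> norm_num at h

lemma weak_core (W : Finset ℕ) (hw : ∀ X : Finset (Fin 5), 2 ≤ X.card →
    (∀ j, ∃ c ∈ Cs j, ∀ i ∈ X, c ∈ A i) → (W ∩ X.biUnion A).Nonempty) :
    WeakSWJR 5 2 (∑ j, q j) Cs A W := by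
  intro X hX h
  refine hw X (card2 ?_) h
  have hq : (∑ j, q j) = 3 := by decide
  rw [hq] at hX
  exact_mod_cast hX

lemma iw_core (W : Finset ℕ)
    (h0 : ∀ X : Finset (Fin 5), 5 ≤ X.card →
      (∃ c ∈ Cs 0, ∀ i ∈ X, c ∈ A i) → ((W ∩ Cs 0) ∩ X.biUnion A).Nonempty)
    (h1 : ∀ X : Finset (Fin 5), 3 ≤ X.card →
      (∃ c ∈ Cs 1, ∀ i ∈ X, c ∈ A i) → ((W ∩ Cs 1) ∩ X.biUnion A).Nonempty) :
    IWJR 5 2 Cs q A W := by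
  intro j X hX h
  fin_cases j
  · norm_num [q] at hX
    exact h0 X hX h
  · norm_num [q] at hX
    exact h1 X (card3 hX) h

end Stmt5Aux

/-- weak-SW-JR and IW-JR are not mutually exclusive: some SCV
instance admits a committee `W` satisfying both, while the same instance also
admits a committee `W1` satisfying weak-SW-JR but not IW-JR and a committee
`W2` satisfying IW-JR but not weak-SW-JR. -/
theorem stmt_5 :
    ∃ (n ℓ : ℕ) (Cs : Fin ℓ → Finset ℕ) (q : Fin ℓ → ℕ)
      (A : Fin n → Finset ℕ) (W W1 W2 : Finset ℕ),
      0 < n ∧ 0 < ℓ ∧ (∀ j, 0 < q j) ∧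
      (∀ j1 j2 : Fin ℓ, j1 ≠ j2 → Disjoint (Cs j1) (Cs j2)) ∧
      (∀ i, A i ⊆ Finset.univ.biUnion Cs) ∧
      (W ⊆ Finset.univ.biUnion Cs ∧ ∀ j, (W ∩ Cs j).card = q j) ∧
      (W1 ⊆ Finset.univ.biUnion Cs ∧ ∀ j, (W1 ∩ Cs j).card = q j) ∧
      (W2 ⊆ Finset.univ.biUnion Cs ∧ ∀ j, (W2 ∩ Cs j).card = q j) ∧
      (WeakSWJR n ℓ (∑ j, q j) Cs A W ∧ IWJR n ℓ Cs q A W) ∧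
      (WeakSWJR n ℓ (∑ j, q j) Cs A W1 ∧ ¬ IWJR n ℓ Cs q A W1) ∧
      (IWJR n ℓ Cs q A W2 ∧ ¬ WeakSWJR n ℓ (∑ j, q j) Cs A W2) := by
    classical
  refine ⟨5, 2, Stmt5Aux.Cs, Stmt5Aux.q, Stmt5Aux.A,
    {8,9,6}, {0,9,10}, {7,2,6},
    by norm_num, by norm_num, by decide, by decide, by decide,
    ⟨by decide, by decide⟩, ⟨by decide, by decide⟩, ⟨by decide, by decide⟩,
    ⟨Stmt5Aux.weak_core _ (by decide), Stmt5Aux.iw_core _ (by decide) (by decide)⟩,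
    ⟨Stmt5Aux.weak_core _ (by decide), ?_⟩,
    ⟨Stmt5Aux.iw_core _ (by decide) (by decide), ?_⟩⟩
  · intro h
    have hcard : (({2,3,4} : Finset (Fin 5)).card) = 3 := by decide
    have := h 1 {2,3,4} (by rw [hcard]; norm_num [Stmt5Aux.q])
      ⟨6, by decide, by decide⟩
    revert this
    decide
  · intro h
    have hcard : (({0,1} : Finset (Fin 5)).card) = 2 := by decide
    have hq : (∑ j, Stmt5Aux.q j) = 3 := by decide
    have := h {0,1} (by rw [hcard, hq]; norm_num) (by decide)
    revert this
    decide
end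

section
/- Every approval-based sub-committee voting instance admits a committee that simultaneously satisfies weak span-wise justified representation (weak-SW-JR) and intra-wise justified representation (IW-JR). That is, for every finite set of voters N = {1,…,n}, every partition of the candidate set C into subsets C_1,…,C_ℓ, every positive quotas k_j ≤ |C_j| with k = Σ_j k_j, and every profile of approval ballots A_i ⊆ C, there exists W ⊆ C with |W ∩ C_j| = k_j for all j such that W satisfies both weak-SW-JR and IW-JR. -/
open Finset

/-!
Run a greedy algorithm in each block `Cs j`: repeatedly add a candidate approved by at least
`n / q j` voters not yet covered, up to `q j` candidates. The resulting `G j` gives IW-JR: a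
cohesive group missed by `G j` either makes its common candidate eligible, or `G j` is full and
then already covers `q j · n / q j = n` voters. Weighting the block guarantees
`|G j| · n / q j ≤ cov (G j)` by `q j` shows that `W₀ = ⋃ G j` covers at least `|W₀| · n / k`
voters. Continue the greedy from `W₀` with threshold `n / k`, within the quotas. A cohesive
group of size `n / k` missed at the end either makes its common candidate in a block with a free
seat eligible, or all `k` seats are filled and the committee covers
`|W₀| · n / k + (k - |W₀|) · n / k = n` voters. Filling the remaining seats arbitrarily
preserves both properties.
-/

namespace ApprovalVoting

open Function

variable {α : Type*} [DecidableEq α] {n : ℕ} (A : Fin n → Finset α)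

def covered (W : Finset α) : Finset (Fin n) :=
  univ.filter fun i => (W ∩ A i).Nonempty

def supporters (c : α) : Finset (Fin n) :=
  univ.filter fun i => c ∈ A i

variable {A}

lemma covered_mono {W W' : Finset α} (h : W ⊆ W') : covered A W ⊆ covered A W' :=
  monotone_filter_right _ fun _ _ => Nonempty.mono (inter_subset_inter_right h)

@[simp]
lemma covered_empty : covered A (∅ : Finset α) = ∅ := by
  simp [covered]

lemma covered_insert (c : α) (W : Finset α) :
    covered A (insert c W) = supporters A c ∪ covered A W := by
  ext i
  simp only [covered, supporters, mem_union, mem_filter, mem_univ, true_and]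
  by_cases hc : c ∈ A i <;> simp [hc, insert_inter_of_mem, insert_inter_of_notMem]

lemma card_covered_insert (c : α) (W : Finset α) :
    #(covered A (insert c W)) = #(supporters A c \ covered A W) + #(covered A W) := by
  rw [covered_insert, card_sdiff_add_card]

lemma supporters_subset_covered {c : α} {W : Finset α} (hc : c ∈ W) :
    supporters A c ⊆ covered A W :=
  fun i hi => mem_filter.2 ⟨mem_univ i, ⟨c, mem_inter.2 ⟨hc, (mem_filter.1 hi).2⟩⟩⟩

lemma inter_biUnion_nonempty_iff {W : Finset α} {X : Finset (Fin n)} :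
    (W ∩ X.biUnion A).Nonempty ↔ ¬Disjoint X (covered A W) := by
  simp [inter_biUnion, biUnion_nonempty, not_disjoint_iff, covered]

lemma card_covered_add_card_le {W : Finset α} {X : Finset (Fin n)}
    (h : Disjoint X (covered A W)) : #(covered A W) + #X ≤ n := by
  simpa [card_union_of_disjoint h.symm] using card_le_univ (covered A W ∪ X)

lemma notMem_of_disjoint_covered {c : α} {W : Finset α} {X : Finset (Fin n)}
    (hcX : ∀ i ∈ X, c ∈ A i) (hX : X.Nonempty) (h : Disjoint X (covered A W)) : c ∉ W := by
  obtain ⟨i, hi⟩ := hX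
  exact fun hc => disjoint_left.1 h hi <|
    supporters_subset_covered hc (mem_filter.2 ⟨mem_univ i, hcX i hi⟩)

lemma card_le_card_supporters_sdiff_covered {c : α} {W : Finset α} {X : Finset (Fin n)}
    (hcX : ∀ i ∈ X, c ∈ A i) (h : Disjoint X (covered A W)) :
    #X ≤ #(supporters A c \ covered A W) :=
  card_le_card (subset_sdiff.2 ⟨fun i hi => mem_filter.2 ⟨mem_univ i, hcX i hi⟩, h⟩)

theorem exists_greedy_extension (F : Finset (Finset α)) {W₀ : Finset α} (hW₀ : W₀ ∈ F) (θ : ℝ) :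
    ∃ W ∈ F, W₀ ⊆ W ∧ #(covered A W₀) + ((#W : ℝ) - #W₀) * θ ≤ #(covered A W) ∧
      ∀ c ∉ W, insert c W ∈ F → (#(supporters A c \ covered A W) : ℝ) < θ := by
  set S := F.filter fun W => W₀ ⊆ W ∧ #(covered A W₀) + ((#W : ℝ) - #W₀) * θ ≤ #(covered A W)
  obtain ⟨W, hWS, hmax⟩ := S.exists_max_image card ⟨W₀, mem_filter.2 ⟨hW₀, subset_rfl, by simp⟩⟩
  obtain ⟨hWF, hW₀W, hcov⟩ := mem_filter.1 hWS
  refine ⟨W, hWF, hW₀W, hcov, fun c hcW hcF => ?_⟩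
  by_contra! hθ
  have hinsert : insert c W ∈ S := by
    refine mem_filter.2 ⟨hcF, hW₀W.trans (subset_insert c W), ?_⟩
    rw [card_covered_insert, card_insert_of_notMem hcW]
    push_cast
    linarith
  have := hmax _ hinsert
  rw [card_insert_of_notMem hcW] at this
  omega

lemma card_pos_of_div_le {m : ℕ} (hn : 0 < n) (hm : 0 < m) {X : Finset (Fin n)}
    (hX : (n : ℝ) / m ≤ #X) : 0 < #X := by
  have : (0 : ℝ) < n / m := by positivity
  exact_mod_cast this.trans_le hX

theorem exists_subset_justified (hn : 0 < n) (P : Finset α) {m : ℕ} (hm : 0 < m) :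
    ∃ G ⊆ P, #G ≤ m ∧ #G * ((n : ℝ) / m) ≤ #(covered A G) ∧
      ∀ X : Finset (Fin n), (n : ℝ) / m ≤ #X → (∃ c ∈ P, ∀ i ∈ X, c ∈ A i) →
        (G ∩ X.biUnion A).Nonempty := by
  obtain ⟨G, hGF, -, hcov, hstop⟩ :=
    exists_greedy_extension (A := A) (P.powerset.filter (#· ≤ m)) (W₀ := ∅) (by simp) (n / m)
  obtain ⟨hGP, hGm⟩ : G ⊆ P ∧ #G ≤ m := by simpa using hGF
  simp only [covered_empty, card_empty, CharP.cast_eq_zero, sub_zero, zero_add] at hcov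
  refine ⟨G, hGP, hGm, hcov, fun X hX ⟨c, hcP, hcX⟩ => ?_⟩
  by_contra h
  have hdisj := not_not.1 (inter_biUnion_nonempty_iff.not.1 h)
  have hXpos := card_pos_of_div_le hn hm hX
  rcases hGm.eq_or_lt with hfull | hlt
  · have hall : n ≤ #(covered A G) := by
      rw [hfull, mul_div_cancel₀ _ (by positivity)] at hcov
      exact_mod_cast hcov
    have := card_covered_add_card_le hdisj
    omega
  · have hcG := notMem_of_disjoint_covered hcX (card_pos.1 hXpos) hdisj
    have hins : insert c G ∈ P.powerset.filter (#· ≤ m) := by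
      simpa [insert_subset_iff, hcP, hGP, card_insert_of_notMem hcG] using hlt
    have hXle : (#X : ℝ) ≤ #(supporters A c \ covered A G) := by
      exact_mod_cast card_le_card_supporters_sdiff_covered hcX hdisj
    linarith [hstop c hcG hins]

lemma card_biUnion_mul_le_card_covered {ι : Type*} (s : Finset ι) {G : ι → Finset α}
    {q : ι → ℕ} (hq : ∀ j ∈ s, 0 < q j)
    (hG : ∀ j ∈ s, #(G j) * ((n : ℝ) / q j) ≤ #(covered A (G j))) :
    #(s.biUnion G) * ((n : ℝ) / ∑ j ∈ s, q j) ≤ #(covered A (s.biUnion G)) := by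
  rcases s.eq_empty_or_nonempty with rfl | hs
  · simp
  have hK : (0 : ℝ) < ∑ j ∈ s, q j := by exact_mod_cast sum_pos hq hs
  rw [← mul_div_assoc, div_le_iff₀ hK, Nat.cast_sum, mul_sum]
  calc (#(s.biUnion G) : ℝ) * n
      ≤ ∑ j ∈ s, (#(G j) : ℝ) * n := by
        rw [← sum_mul]; gcongr; exact_mod_cast card_biUnion_le
    _ ≤ ∑ j ∈ s, (#(covered A (G j)) : ℝ) * q j := by
        refine sum_le_sum fun j hj => ?_
        have hqj : (0 : ℝ) < q j := by exact_mod_cast hq j hj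
        rw [← div_le_iff₀ hqj, mul_div_assoc]
        exact hG j hj
    _ ≤ ∑ j ∈ s, (#(covered A (s.biUnion G)) : ℝ) * q j := by
        gcongr with j hj
        exact covered_mono (subset_biUnion_of_mem G hj)

section Blocks

variable {ι : Type*} [Fintype ι] {Cs : ι → Finset α} {q : ι → ℕ}

variable (Cs q) in
def partialCommittees : Finset (Finset α) :=
  (univ.biUnion Cs).powerset.filter fun W => ∀ j, #(W ∩ Cs j) ≤ q j

lemma mem_partialCommittees {W : Finset α} :
    W ∈ partialCommittees Cs q ↔ W ⊆ univ.biUnion Cs ∧ ∀ j, #(W ∩ Cs j) ≤ q j := by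
  rw [partialCommittees, mem_filter, mem_powerset]

lemma biUnion_inter_eq (hCs : Pairwise (Disjoint on Cs)) {G : ι → Finset α}
    (hG : ∀ j, G j ⊆ Cs j) (j : ι) : univ.biUnion G ∩ Cs j = G j := by
  ext x
  simp only [mem_inter, mem_biUnion, mem_univ, true_and]
  refine ⟨fun ⟨⟨j', hx⟩, hxj⟩ => ?_, fun hx => ⟨⟨j, hx⟩, hG j hx⟩⟩
  obtain rfl | hne := eq_or_ne j' j
  · exact hx
  · exact absurd hxj (disjoint_left.1 (hCs hne) (hG j' hx))

lemma card_eq_sum_card_inter (hCs : Pairwise (Disjoint on Cs)) {W : Finset α}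
    (hW : W ⊆ univ.biUnion Cs) : #W = ∑ j, #(W ∩ Cs j) := by
  conv_lhs => rw [← inter_eq_left.2 hW, inter_biUnion]
  exact card_biUnion fun j _ j' _ hne =>
    (hCs hne).mono inter_subset_right inter_subset_right

lemma insert_mem_partialCommittees (hCs : Pairwise (Disjoint on Cs)) {W : Finset α}
    (hW : W ∈ partialCommittees Cs q) {c : α} {j : ι} (hc : c ∈ Cs j) (hcW : c ∉ W)
    (hlt : #(W ∩ Cs j) < q j) : insert c W ∈ partialCommittees Cs q := by
  obtain ⟨hWC, hWq⟩ := mem_partialCommittees.1 hW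
  refine mem_partialCommittees.2 ⟨insert_subset (mem_biUnion.2 ⟨j, mem_univ j, hc⟩) hWC,
    fun j' => ?_⟩
  obtain rfl | hne := eq_or_ne j' j
  · rw [insert_inter_of_mem hc, card_insert_of_notMem fun h => hcW (mem_inter.1 h).1]
    exact hlt
  · rw [insert_inter_of_notMem (disjoint_left.1 (hCs hne.symm) hc)]
    exact hWq j'

lemma exists_superset_card_inter_eq (hCs : Pairwise (Disjoint on Cs)) {W : Finset α}
    (hW : W ∈ partialCommittees Cs q) (hq : ∀ j, q j ≤ #(Cs j)) :
    ∃ W' ⊇ W, W' ⊆ univ.biUnion Cs ∧ ∀ j, #(W' ∩ Cs j) = q j := by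
  obtain ⟨hWC, hWq⟩ := mem_partialCommittees.1 hW
  choose E hWE hEC hEq using fun j =>
    exists_subsuperset_card_eq (inter_subset_right (s₁ := W)) (hWq j) (hq j)
  refine ⟨univ.biUnion E, fun x hx => ?_, biUnion_mono fun j _ => hEC j,
    fun j => by rw [biUnion_inter_eq hCs hEC, hEq]⟩
  obtain ⟨j, -, hxj⟩ := mem_biUnion.1 (hWC hx)
  exact mem_biUnion.2 ⟨j, mem_univ j, hWE j (mem_inter.2 ⟨hx, hxj⟩)⟩

end Blocks

theorem exists_weakSWJR_extension {ℓ : ℕ} (hn : 0 < n) {Cs : Fin ℓ → Finset α}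
    (hCs : Pairwise (Disjoint on Cs)) {q : Fin ℓ → ℕ} (hk : 0 < ∑ j, q j) {W₀ : Finset α}
    (hW₀ : W₀ ∈ partialCommittees Cs q)
    (hcov₀ : #W₀ * ((n : ℝ) / (∑ j, q j : ℕ)) ≤ #(covered A W₀)) :
    ∃ W ∈ partialCommittees Cs q, W₀ ⊆ W ∧ WeakSWJR n ℓ (∑ j, q j) Cs A W := by
  set k := ∑ j, q j
  obtain ⟨W, hW, hW₀W, hcov, hstop⟩ := exists_greedy_extension (A := A) _ hW₀ (n / k)
  refine ⟨W, hW, hW₀W, fun X hX hcoh => ?_⟩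
  by_contra h
  have hdisj := not_not.1 (inter_biUnion_nonempty_iff.not.1 h)
  have hXpos := card_pos_of_div_le hn hk hX
  have hXn := card_covered_add_card_le hdisj
  by_cases hfull : ∀ j, #(W ∩ Cs j) = q j
  · have hWk : #W = k := by
      rw [card_eq_sum_card_inter hCs (mem_partialCommittees.1 hW).1]
      exact sum_congr rfl fun j _ => hfull j
    have hall : (n : ℝ) ≤ #(covered A W) := by
      rw [hWk] at hcov
      have : (k : ℝ) * (n / k) = n := mul_div_cancel₀ _ (by positivity)
      linarith
    have : n ≤ #(covered A W) := by exact_mod_cast hall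
    omega
  · obtain ⟨j, hj⟩ := not_forall.1 hfull
    obtain ⟨c, hcC, hcX⟩ := hcoh j
    have hcW := notMem_of_disjoint_covered hcX (card_pos.1 hXpos) hdisj
    have hlt := hstop c hcW <| insert_mem_partialCommittees hCs hW hcC hcW <|
      ((mem_partialCommittees.1 hW).2 j).lt_of_ne hj
    have hXle : (#X : ℝ) ≤ #(supporters A c \ covered A W) := by
      exact_mod_cast card_le_card_supporters_sdiff_covered hcX hdisj
    linarith

end ApprovalVoting

lemma WeakSWJR.mono {α : Type*} [DecidableEq α] {n ℓ k : ℕ} {Cs : Fin ℓ → Finset α}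
    {A : Fin n → Finset α} {W W' : Finset α}
    (h : WeakSWJR n ℓ k Cs A W) (hWW' : W ⊆ W') : WeakSWJR n ℓ k Cs A W' :=
  fun X hX hcoh => (h X hX hcoh).mono (inter_subset_inter_right hWW')

open ApprovalVoting Function in
theorem stmt_7_general {α : Type*} [DecidableEq α] (n ℓ : ℕ) (hn : 0 < n) (hℓ : 0 < ℓ)
    (Cs : Fin ℓ → Finset α)
    (hdisj : ∀ j1 j2 : Fin ℓ, j1 ≠ j2 → Disjoint (Cs j1) (Cs j2))
    (q : Fin ℓ → ℕ) (hq : ∀ j, 0 < q j) (hqle : ∀ j, q j ≤ (Cs j).card)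
    (A : Fin n → Finset α) :
    ∃ W : Finset α, W ⊆ Finset.univ.biUnion Cs ∧ (∀ j, (W ∩ Cs j).card = q j) ∧
      WeakSWJR n ℓ (∑ j, q j) Cs A W ∧ IWJR n ℓ Cs q A W := by
  have hCs : Pairwise (Disjoint on Cs) := fun i j h => hdisj i j h
  choose G hGC hGq hGcov hGJR using fun j => exists_subset_justified (A := A) hn (Cs j) (hq j)
  have hW₀ : univ.biUnion G ∈ partialCommittees Cs q :=
    mem_partialCommittees.2 ⟨biUnion_mono fun j _ => hGC j,
      fun j => (biUnion_inter_eq hCs hGC j).symm ▸ hGq j⟩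
  have hk : 0 < ∑ j, q j := sum_pos (fun j _ => hq j) ⟨⟨0, hℓ⟩, mem_univ _⟩
  obtain ⟨W₁, hW₁, hW₀W₁, hSW⟩ := exists_weakSWJR_extension hn hCs hk hW₀
    (card_biUnion_mul_le_card_covered univ (fun j _ => hq j) fun j _ => hGcov j)
  obtain ⟨W, hW₁W, hWC, hWq⟩ := exists_superset_card_inter_eq hCs hW₁ hqle
  refine ⟨W, hWC, hWq, hSW.mono hW₁W, fun j X hX hc => (hGJR j X hX hc).mono ?_⟩
  have hGW : G j ⊆ W := ((subset_biUnion_of_mem G (mem_univ j)).trans hW₀W₁).trans hW₁W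
  exact inter_subset_inter_right (subset_inter hGW (hGC j))

/-- every approval-based SCV instance admits a committee that
simultaneously satisfies weak-SW-JR and IW-JR. -/
theorem stmt_7 {α : Type*} [DecidableEq α] (n ℓ : ℕ) (hn : 0 < n) (hℓ : 0 < ℓ)
    (Cs : Fin ℓ → Finset α)
    (hdisj : ∀ j1 j2 : Fin ℓ, j1 ≠ j2 → Disjoint (Cs j1) (Cs j2))
    (q : Fin ℓ → ℕ) (hq : ∀ j, 0 < q j) (hqle : ∀ j, q j ≤ (Cs j).card)
    (A : Fin n → Finset α) (hA : ∀ i, A i ⊆ Finset.univ.biUnion Cs) :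
    ∃ W : Finset α, W ⊆ Finset.univ.biUnion Cs ∧ (∀ j, (W ∩ Cs j).card = q j) ∧
      WeakSWJR n ℓ (∑ j, q j) Cs A W ∧ IWJR n ℓ Cs q A W :=
  stmt_7_general n ℓ hn hℓ Cs hdisj q hq hqle A
end

section
/- Correctness of the Set Cover reduction: let X = {1,…,n} be a finite ground set, let S_1,…,S_t be subsets of X with X = S_1 ∪ ⋯ ∪ S_t, and let k' be a positive integer with k' ≤ t. Consider the SCV instance with voters N = X, candidate subsets C_1 = {a_1,…,a_n} and C_2 = {s_1,…,s_t}, quotas k_1 = n and k_2 = k', and approval ballots A_i = {s_j : i ∈ S_j}. Then there exists a committee of this instance satisfying span-wise justified representation (SW-JR) if and only if there exists H ⊆ {1,…,t} with |H| ≤ k' and X = ⋃_{j∈H} S_j. -/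
open Finset

/-- correctness of the Set Cover reduction: for a ground set
`X = Fin n` (nonempty), subsets `S₁,…,S_t` covering `X`, and `0 < k' ≤ t`,
the SCV instance with candidates `C₁ = {a₁,…,a_n}` (left injections),
`C₂ = {s₁,…,s_t}` (right injections), quotas `k₁ = n`, `k₂ = k'`, and ballots
`A_i = {s_j : i ∈ S_j}`, admits a committee satisfying SW-JR iff there is
`H ⊆ {1,…,t}` with `|H| ≤ k'` covering `X`. -/
theorem stmt_8 (n t k' : ℕ) (hn : 0 < n) (hk' : 0 < k') (hk't : k' ≤ t)
    (S : Fin t → Finset (Fin n)) (hcover : ∀ i, ∃ j, i ∈ S j) :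
    (∃ W : Finset (Fin n ⊕ Fin t),
        (W ∩ Finset.univ.image Sum.inl).card = n ∧
        (W ∩ Finset.univ.image Sum.inr).card = k' ∧
        SWJR n (n + k')
          (fun i => (Finset.univ.filter fun j => i ∈ S j).image Sum.inr) W) ↔
      ∃ H : Finset (Fin t), H.card ≤ k' ∧ ∀ i, ∃ j ∈ H, i ∈ S j := by
  constructor
  · rintro ⟨W, hl, hr, hsw⟩
    refine ⟨Finset.univ.filter (fun j => Sum.inr j ∈ W), ?_, ?_⟩
    · have hsub : (Finset.univ.filter (fun j => Sum.inr j ∈ W)).image Sum.inr ⊆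
          W ∩ Finset.univ.image Sum.inr := by
        intro x hx
        simp only [Finset.mem_image, Finset.mem_filter, Finset.mem_univ, true_and] at hx
        obtain ⟨j, hjW, rfl⟩ := hx
        simp [Finset.mem_inter, hjW]
      calc (Finset.univ.filter (fun j => Sum.inr j ∈ W)).card
          = ((Finset.univ.filter (fun j => Sum.inr j ∈ W)).image Sum.inr).card :=
            (Finset.card_image_of_injective _ Sum.inr_injective).symm
        _ ≤ (W ∩ Finset.univ.image Sum.inr).card := Finset.card_le_card hsub
        _ = k' := hr
    · intro i
      have hcard : ((n : ℝ)) / ((n + k' : ℕ) : ℝ) ≤ (({i} : Finset (Fin n)).card : ℝ) := by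
        simp only [Finset.card_singleton, Nat.cast_one]
        rw [div_le_one (by positivity)]
        push_cast; linarith
      obtain ⟨j0, hj0⟩ := hcover i
      have hne := hsw {i} hcard ⟨Sum.inr j0, by simp [hj0]⟩
      obtain ⟨x, hx⟩ := hne
      simp only [Finset.mem_inter, Finset.singleton_biUnion, Finset.mem_image,
        Finset.mem_filter, Finset.mem_univ, true_and] at hx
      obtain ⟨hxW, j, hjS, rfl⟩ := hx
      exact ⟨j, by simp [hxW], hjS⟩
  · rintro ⟨H, hHcard, hHcov⟩
    obtain ⟨H', hHH', hH'card⟩ := Finset.exists_superset_card_eq hHcard (by simpa)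
    refine ⟨Finset.univ.image Sum.inl ∪ H'.image Sum.inr, ?_, ?_, ?_⟩
    · have : (Finset.univ.image Sum.inl ∪ H'.image Sum.inr) ∩
          Finset.univ.image Sum.inl = (Finset.univ.image Sum.inl : Finset (Fin n ⊕ Fin t)) := by
        ext x; cases x <;> simp
      rw [this, Finset.card_image_of_injective _ Sum.inl_injective, Finset.card_univ,
        Fintype.card_fin]
    · have : (Finset.univ.image (Sum.inl : Fin n → Fin n ⊕ Fin t) ∪ H'.image Sum.inr) ∩
          Finset.univ.image Sum.inr = H'.image Sum.inr := by
        ext x; cases x <;> simp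
      rw [this, Finset.card_image_of_injective _ Sum.inr_injective, hH'card]
    · intro X hX _
      have hXne : X.Nonempty := by
        rcases X.eq_empty_or_nonempty with rfl | h
        · exfalso
          have h1 : (0:ℝ) < (n : ℝ) / ((n + k' : ℕ) : ℝ) := by positivity
          simp only [Finset.card_empty, Nat.cast_zero] at hX
          linarith
        · exact h
      obtain ⟨i, hi⟩ := hXne
      obtain ⟨j, hjH, hjS⟩ := hHcov i
      refine ⟨Sum.inr j, ?_⟩
      simp only [Finset.mem_inter, Finset.mem_union, Finset.mem_image, Finset.mem_biUnion]
      constructor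
      · right; exact ⟨j, hHH' hjH, rfl⟩
      · exact ⟨i, hi, by simp [hjS]⟩
end

section
/- Marginal contribution lemma for PAV: let N = {1,…,n} be voters with approval ballots A_i ⊆ C over a finite candidate set C, and let W ⊆ C be any set of candidates with |W| = k > 0. Define the PAV score PAV(W) = Σ_{i∈N} r(|W ∩ A_i|) where r(j) = Σ_{p=1}^{j} 1/p (and r(0) = 0), and define the marginal contribution of c ∈ W as MC(c, W) = PAV(W) − PAV(W \ {c}). Then there exists at least one c ∈ W such that MC(c, W) ≤ |{i ∈ N : A_i ∩ W ≠ ∅}| / k ≤ n/k. -/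
/-!
A voter approving `j > 0` members of `W` loses exactly `1/j` of PAV score when any one of them is
removed, and nothing when another candidate is removed. Summed over `c ∈ W`, the marginal
contributions therefore count every voter who approves someone in `W` exactly once, so their
minimum is at most their average `|{i : A_i ∩ W ≠ ∅}| / k`.
-/

open Finset

section PAV

variable {α : Type*} [DecidableEq α]

theorem harmonicR_succ (j : ℕ) : harmonicR (j + 1) = harmonicR j + 1 / (j + 1) := by
  simp only [harmonicR, sum_range_succ]

theorem harmonicR_card_sub_card_erase {s : Finset α} {c : α} (hc : c ∈ s) :
    harmonicR #s - harmonicR #(s.erase c) = 1 / #s := by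
  rw [← card_erase_add_one hc, harmonicR_succ]
  push_cast
  ring

theorem harmonicR_card_inter_sub_card_erase_inter {W B : Finset α} {c : α} (hc : c ∈ W) :
    harmonicR #(W ∩ B) - harmonicR #(W.erase c ∩ B) =
      if c ∈ B then 1 / (#(W ∩ B) : ℝ) else 0 := by
  rw [erase_inter]
  split_ifs with hcB
  · exact harmonicR_card_sub_card_erase (mem_inter.mpr ⟨hc, hcB⟩)
  · rw [erase_eq_of_notMem fun h => hcB (mem_inter.mp h).2, sub_self]

theorem sum_harmonicR_card_inter_sub_card_erase_inter (W B : Finset α) :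
    ∑ c ∈ W, (harmonicR #(W ∩ B) - harmonicR #(W.erase c ∩ B)) =
      if (B ∩ W).Nonempty then 1 else 0 := by
  rw [sum_congr rfl fun c hc => harmonicR_card_inter_sub_card_erase_inter hc,
    sum_ite_mem, sum_const, nsmul_eq_mul, inter_comm B W]
  split_ifs with hne
  · have : (#(W ∩ B) : ℝ) ≠ 0 := by exact_mod_cast (card_pos.mpr hne).ne'
    field_simp
  · simp [not_nonempty_iff_eq_empty.mp hne]

theorem sum_SWPAV_sub_SWPAV_erase (n : ℕ) (A : Fin n → Finset α) (W : Finset α) :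
    ∑ c ∈ W, (SWPAV n A W - SWPAV n A (W.erase c)) =
      #(univ.filter fun i : Fin n => (A i ∩ W).Nonempty) := by
  simp only [SWPAV, ← sum_sub_distrib]
  rw [sum_comm, card_filter]
  push_cast
  exact sum_congr rfl fun i _ => sum_harmonicR_card_inter_sub_card_erase_inter W (A i)

end PAV

/-- marginal contribution lemma for PAV: for any `W` with
`|W| = k > 0`, some `c ∈ W` has marginal contribution
`PAV(W) − PAV(W \ {c})` at most `|{i : A_i ∩ W ≠ ∅}| / k ≤ n/k`. -/
theorem stmt_10 {α : Type*} [DecidableEq α] (n : ℕ) (A : Fin n → Finset α)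
    (W : Finset α) (k : ℕ) (hk : 0 < k) (hW : W.card = k) :
    ∃ c ∈ W,
      SWPAV n A W - SWPAV n A (W.erase c) ≤
        ((Finset.univ.filter fun i : Fin n => (A i ∩ W).Nonempty).card : ℝ) / k ∧
      ((Finset.univ.filter fun i : Fin n => (A i ∩ W).Nonempty).card : ℝ) / k ≤
        (n : ℝ) / k := by
  have hWne : W.Nonempty := card_pos.mp (hW ▸ hk)
  obtain ⟨c, hc, hle⟩ := exists_le_of_sum_le hWne (g := fun _ =>
    (#(univ.filter fun i : Fin n => (A i ∩ W).Nonempty) : ℝ) / k) (by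
      rw [sum_SWPAV_sub_SWPAV_erase, sum_const, hW, nsmul_eq_mul]
      field_simp
      rfl)
  refine ⟨c, hc, hle, ?_⟩
  have hcard := card_filter_le (univ : Finset (Fin n)) fun i => (A i ∩ W).Nonempty
  rw [card_univ, Fintype.card_fin] at hcard
  gcongr
end

section
/- There exists an approval-based sub-committee voting instance that admits a committee satisfying span-wise justified representation (SW-JR), yet no committee maximizing the span-wise PAV score satisfies SW-JR and no committee maximizing the intra-wise PAV score satisfies SW-JR. Concretely: take voters N = {1,…,12}, C_1 = {a,b,c} with quota k_1 = 1, C_2 = {a_1,…,a_5, b_1,…,b_5, c_1} with quota k_2 = 2, and ballots A_i = {a, a_i} for i ∈ {1,…,5}, A_i = {b, b_{i−5}} for i ∈ {6,…,10}, A_i = {c, c_1} for i ∈ {11,12}. -/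
open Finset

/-- Candidate subsets for STATEMENT 14: inside `Fin 14`, `C₁ = {a,b,c} = {0,1,2}`
and `C₂ = {a₁,…,a₅,b₁,…,b₅,c₁} = {3,…,13}`. -/
def Cs14 : Fin 2 → Finset (Fin 14) :=
  ![{0, 1, 2}, {3, 4, 5, 6, 7, 8, 9, 10, 11, 12, 13}]

/-- Quotas `k₁ = 1`, `k₂ = 2`. -/
def q14 : Fin 2 → ℕ := ![1, 2]

/-- Ballots: `A_i = {a, a_i}` for `i ∈ {1,…,5}`, `A_i = {b, b_{i−5}}` for
`i ∈ {6,…,10}`, `A_i = {c, c₁}` for `i ∈ {11,12}` (0-indexed: `a_i = i+3`,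
`b_{i-5} = i+3`, `c₁ = 13`). -/
def A14 : Fin 12 → Finset (Fin 14) := fun i =>
  if h : (i : ℕ) < 5 then {0, ⟨(i : ℕ) + 3, by omega⟩}
  else if h2 : (i : ℕ) < 10 then {1, ⟨(i : ℕ) + 3, by omega⟩}
  else {2, 13}

/-- A committee of the STATEMENT 14 instance. -/
def Comm14 (W : Finset (Fin 14)) : Prop := ∀ j, (W ∩ Cs14 j).card = q14 j

set_option maxRecDepth 10000

def pav2 : ℕ → ℕ | 0 => 0 | 1 => 2 | _ => 3
def SWPAV2 (W : Finset (Fin 14)) : ℕ := ∑ i : Fin 12, pav2 ((W ∩ A14 i).card)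
def IWPAVn (W : Finset (Fin 14)) : ℕ := ∑ j : Fin 2, ∑ i : Fin 12, (W ∩ A14 i ∩ Cs14 j).card
def Xa (m : Fin 5) : Finset (Fin 12) := univ.filter (fun i => (i:ℕ) < 5 ∧ (i:ℕ) ≠ (m:ℕ))
def Xb (m : Fin 5) : Finset (Fin 12) := univ.filter (fun i => 5 ≤ (i:ℕ) ∧ (i:ℕ) < 10 ∧ (i:ℕ) ≠ (m:ℕ)+5)
def SWJRfin (W : Finset (Fin 14)) : Prop :=
  ∀ m : Fin 5, (W ∩ (Xa m).biUnion A14).Nonempty ∧ (W ∩ (Xb m).biUnion A14).Nonempty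

lemma key2 : ∀ x y z : Fin 14, Comm14 {x,y,z} → SWJRfin {x,y,z} → SWPAV2 {x,y,z} ≤ 14 := by
  unfold Comm14 SWJRfin; decide
lemma key3 : ∀ x y z : Fin 14, Comm14 {x,y,z} → SWJRfin {x,y,z} → IWPAVn {x,y,z} ≤ 7 := by
  unfold Comm14 SWJRfin; decide
lemma wit1 : Comm14 {0,13,8} ∧ SWPAV2 {0,13,8} = 16 ∧ IWPAVn {0,13,8} = 8 := by
  unfold Comm14; decide
lemma cardXab : ∀ m, (Xa m).card = 4 ∧ (Xb m).card = 4 := by decide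
lemma commonXab : ∀ m, (∀ i ∈ Xa m, (0:Fin 14) ∈ A14 i) ∧ (∀ i ∈ Xb m, (1:Fin 14) ∈ A14 i) := by decide
lemma cstotal : ∀ w : Fin 14, w ∈ Cs14 0 ∨ w ∈ Cs14 1 := by decide
lemma cardA : ∀ i, (A14 i).card ≤ 2 := by decide
lemma cardAC : ∀ (i : Fin 12) (j : Fin 2), (A14 i ∩ Cs14 j).card ≤ 1 := by decide

lemma harm_le2 : ∀ c ≤ 2, harmonicR c = (pav2 c : ℝ)/2 := by
  intro c hc
  interval_cases c <;> simp [harmonicR, Finset.sum_range_succ, pav2] <;> norm_num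

lemma harm_le1 : ∀ c ≤ 1, harmonicR c = (c : ℝ) := by
  intro c hc
  interval_cases c <;> simp [harmonicR, Finset.sum_range_succ]

lemma swpav_eq (W : Finset (Fin 14)) : SWPAV 12 A14 W = (SWPAV2 W : ℝ)/2 := by
  unfold SWPAV SWPAV2
  rw [Nat.cast_sum, Finset.sum_div]
  refine Finset.sum_congr rfl fun i _ => ?_
  exact harm_le2 _ (le_trans (card_le_card inter_subset_right) (cardA i))

lemma iwpav_eq (W : Finset (Fin 14)) : IWPAV 12 2 Cs14 A14 W = (IWPAVn W : ℝ) := by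
  unfold IWPAV IWPAVn
  rw [Nat.cast_sum]
  refine Finset.sum_congr rfl fun j _ => ?_
  rw [Nat.cast_sum]
  refine Finset.sum_congr rfl fun i _ => ?_
  refine harm_le1 _ (le_trans (card_le_card ?_) (cardAC i j))
  exact inter_subset_inter inter_subset_right (le_refl _)

lemma decompose (W : Finset (Fin 14)) (h : Comm14 W) : ∃ x y z : Fin 14, W = {x,y,z} := by
  obtain ⟨x, hx⟩ := card_eq_one.mp (h 0)
  obtain ⟨y, z, hyz, hyz'⟩ := card_eq_two.mp (h 1)
  refine ⟨x, y, z, ?_⟩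
  have hu : W = (W ∩ Cs14 0) ∪ (W ∩ Cs14 1) := by
    ext w
    simp only [mem_union, mem_inter]
    constructor
    · intro hw; rcases cstotal w with h | h
      · exact Or.inl ⟨hw, h⟩
      · exact Or.inr ⟨hw, h⟩
    · rintro (⟨hw, _⟩ | ⟨hw, _⟩) <;> exact hw
  rw [hu, hx, hyz']
  exact (insert_eq x {y,z}).symm

lemma jr_to_fin (W : Finset (Fin 14)) (h : SWJR 12 3 A14 W) : SWJRfin W := by
  intro m
  constructor
  · refine h (Xa m) ?_ ⟨0, (commonXab m).1⟩
    rw [(cardXab m).1]; norm_num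
  · refine h (Xb m) ?_ ⟨1, (commonXab m).2⟩
    rw [(cardXab m).2]; norm_num

lemma part1 : SWJR 12 3 A14 ({0,8,9} : Finset (Fin 14)) := by
  intro X hX hc
  have h4 : 4 ≤ X.card := by
    have h4' : ((4:ℕ):ℝ) ≤ (X.card:ℝ) := by push_cast; linarith
    exact_mod_cast h4'
  by_cases h5 : ∃ i ∈ X, (i:ℕ) < 5
  · obtain ⟨i, hi, hlt⟩ := h5
    refine ⟨0, mem_inter.2 ⟨by decide, mem_biUnion.2 ⟨i, hi, ?_⟩⟩⟩
    simp [A14, dif_pos hlt]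
  · push_neg at h5
    by_cases hv5 : (5 : Fin 12) ∈ X
    · exact ⟨8, mem_inter.2 ⟨by decide, mem_biUnion.2 ⟨5, hv5, by decide⟩⟩⟩
    by_cases hv6 : (6 : Fin 12) ∈ X
    · exact ⟨9, mem_inter.2 ⟨by decide, mem_biUnion.2 ⟨6, hv6, by decide⟩⟩⟩
    exfalso
    by_cases hcc : ∃ l ∈ X, 10 ≤ (l:ℕ)
    · obtain ⟨l, hl, hl10⟩ := hcc
      by_cases hbb : ∃ j ∈ X, (j:ℕ) < 10
      · obtain ⟨j, hj, hj10⟩ := hbb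
        obtain ⟨c, hcm⟩ := hc
        have hj5 : 5 ≤ (j:ℕ) := h5 j hj
        have hcj := hcm j hj
        have hcl := hcm l hl
        rw [show A14 j = {1, ⟨(j:ℕ)+3, by omega⟩} from by
          simp [A14, dif_neg (by omega : ¬ (j:ℕ) < 5), dif_pos hj10]] at hcj
        rw [show A14 l = {2, 13} from by
          simp [A14, dif_neg (by omega : ¬ (l:ℕ) < 5), dif_neg (by omega : ¬ (l:ℕ) < 10)]] at hcl
        simp only [mem_insert, mem_singleton, Fin.ext_iff] at hcj hcl
        simp only [show ((1 : Fin 14):ℕ) = 1 from rfl, show ((2 : Fin 14):ℕ) = 2 from rfl,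
          show ((13 : Fin 14):ℕ) = 13 from rfl] at hcj hcl
        omega
      · push_neg at hbb
        have hsub : X ⊆ ({10, 11} : Finset (Fin 12)) := by
          intro i hi
          have h1 := hbb i hi
          have h2 : (i:ℕ) < 12 := i.isLt
          simp only [mem_insert, mem_singleton, Fin.ext_iff]
          simp only [show ((10 : Fin 12):ℕ) = 10 from rfl, show ((11 : Fin 12):ℕ) = 11 from rfl]
          omega
        have := card_le_card hsub
        have : ({10, 11} : Finset (Fin 12)).card ≤ 2 := by decide
        omega
    · push_neg at hcc
      have hsub : X ⊆ ({7, 8, 9} : Finset (Fin 12)) := by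
        intro i hi
        have h1 := h5 i hi
        have h2 := hcc i hi
        have h3 : (i:ℕ) ≠ 5 := fun h => hv5 (by
          have he : i = (5 : Fin 12) := Fin.ext (by exact h)
          exact he ▸ hi)
        have h4' : (i:ℕ) ≠ 6 := fun h => hv6 (by
          have he : i = (6 : Fin 12) := Fin.ext (by exact h)
          exact he ▸ hi)
        simp only [mem_insert, mem_singleton, Fin.ext_iff]
        simp only [show ((7 : Fin 12):ℕ) = 7 from rfl, show ((8 : Fin 12):ℕ) = 8 from rfl,
          show ((9 : Fin 12):ℕ) = 9 from rfl]
        omega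
      have := card_le_card hsub
      have : ({7, 8, 9} : Finset (Fin 12)).card ≤ 3 := by decide
      omega

/-- the instance above admits a committee satisfying SW-JR,
yet no SW-PAV–maximizing committee satisfies SW-JR and no IW-PAV–maximizing
committee satisfies SW-JR. -/
theorem stmt_14 :
    (∃ W : Finset (Fin 14), Comm14 W ∧ SWJR 12 3 A14 W) ∧
    (∀ W : Finset (Fin 14), Comm14 W →
      (∀ W', Comm14 W' → SWPAV 12 A14 W' ≤ SWPAV 12 A14 W) →
      ¬ SWJR 12 3 A14 W) ∧
    (∀ W : Finset (Fin 14), Comm14 W →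
      (∀ W', Comm14 W' → IWPAV 12 2 Cs14 A14 W' ≤ IWPAV 12 2 Cs14 A14 W) →
      ¬ SWJR 12 3 A14 W) := by
  refine ⟨⟨{0,8,9}, by unfold Comm14; decide, part1⟩, ?_, ?_⟩
  · intro W hW hmax hjr
    have hle := hmax {0,13,8} wit1.1
    rw [swpav_eq, swpav_eq, wit1.2.1] at hle
    have h16 : (16:ℝ) ≤ (SWPAV2 W : ℝ) := by linarith
    obtain ⟨x, y, z, rfl⟩ := decompose W hW
    have hb := key2 x y z hW (jr_to_fin _ hjr)
    have : (16:ℕ) ≤ SWPAV2 {x,y,z} := by exact_mod_cast h16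
    omega
  · intro W hW hmax hjr
    have hle := hmax {0,13,8} wit1.1
    rw [iwpav_eq, iwpav_eq, wit1.2.2] at hle
    obtain ⟨x, y, z, rfl⟩ := decompose W hW
    have hb := key3 x y z hW (jr_to_fin _ hjr)
    have : (8:ℕ) ≤ IWPAVn {x,y,z} := by exact_mod_cast hle
    omega
end

section
/- There exists an approval-based sub-committee voting instance in which some committee maximizing the intra-wise PAV score fails weak span-wise justified representation (weak-SW-JR). Concretely: take voters N = {1,…,12}, candidate subsets C_1 = {a,b,c} and C_2 = {a',b',c'}, quotas k_1 = k_2 = 2 (so n/k = 3), and ballots A_i = {a, a'} for i ∈ {1,…,5}, A_i = {b, b'} for i ∈ {6,…,9}, A_i = {c, c'} for i ∈ {10,11,12}; then the committee W* = {a, b, a', b'} maximizes the IW-PAV score but does not satisfy weak-SW-JR. -/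
open Finset

/-- Candidate subsets for STATEMENT 16: inside `Fin 6`, `C₁ = {a,b,c} = {0,1,2}`
and `C₂ = {a',b',c'} = {3,4,5}`. -/
def Cs16 : Fin 2 → Finset (Fin 6) := ![{0, 1, 2}, {3, 4, 5}]

/-- Quotas `k₁ = k₂ = 2`. -/
def q16 : Fin 2 → ℕ := ![2, 2]

/-- Ballots: `{a,a'}` for voters `1,…,5`, `{b,b'}` for voters `6,…,9`,
`{c,c'}` for voters `10,11,12` (0-indexed). -/
def A16 : Fin 12 → Finset (Fin 6) := fun i =>
  if (i : ℕ) < 5 then {0, 3}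
  else if (i : ℕ) < 9 then {1, 4}
  else {2, 5}

lemma harm01 {n : ℕ} (h : n ≤ 1) : harmonicR n = n := by
  interval_cases n <;> simp [harmonicR]

lemma card16 : ∀ (W : Finset (Fin 6)) (i : Fin 12) (j : Fin 2),
    (W ∩ A16 i ∩ Cs16 j).card ≤ 1 := by decide

lemma iwpav_eq_s16 (W : Finset (Fin 6)) :
    IWPAV 12 2 Cs16 A16 W = ((∑ j, ∑ i, (W ∩ A16 i ∩ Cs16 j).card : ℕ) : ℝ) := by
  unfold IWPAV
  push_cast
  refine Finset.sum_congr rfl fun j _ => Finset.sum_congr rfl fun i _ => ?_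
  rw [harm01 (card16 W i j)]

/-- the committee `W* = {a, b, a', b'} = {0,1,3,4}` is a
committee of the instance above that maximizes the IW-PAV score but does not
satisfy weak-SW-JR. -/
theorem stmt_16 :
    (∀ j, (({0, 1, 3, 4} : Finset (Fin 6)) ∩ Cs16 j).card = q16 j) ∧
    (∀ W' : Finset (Fin 6), (∀ j, (W' ∩ Cs16 j).card = q16 j) →
      IWPAV 12 2 Cs16 A16 W' ≤ IWPAV 12 2 Cs16 A16 ({0, 1, 3, 4} : Finset (Fin 6))) ∧
    ¬ WeakSWJR 12 2 4 Cs16 A16 ({0, 1, 3, 4} : Finset (Fin 6)) := by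
  refine ⟨by decide, fun W' h => ?_, ?_⟩
  · rw [iwpav_eq_s16, iwpav_eq_s16]
    have : ∀ W' : Finset (Fin 6), (∀ j, (W' ∩ Cs16 j).card = q16 j) →
        (∑ j, ∑ i, (W' ∩ A16 i ∩ Cs16 j).card) ≤
        ∑ j, ∑ i, (({0,1,3,4} : Finset (Fin 6)) ∩ A16 i ∩ Cs16 j).card := by decide
    exact_mod_cast this W' h
  · intro h
    have := h {9, 10, 11}
      (by rw [show (({9, 10, 11} : Finset (Fin 12)).card) = 3 from by decide]; norm_num) (by decide)
    have he : (({0, 1, 3, 4} : Finset (Fin 6)) ∩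
        ({9, 10, 11} : Finset (Fin 12)).biUnion A16) = ∅ := by decide
    rw [he] at this
    exact Finset.not_nonempty_empty this
end
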